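/- Let p be a polynomial and f a polynomial vector field on ℝ^n. For the backward flow: IvIn_f({x : p(x) > 0}) = {x : γ_{p,f}(x) < ∞ and (−1)^{γ_{p,f}(x)} · L^{γ_{p,f}(x)}_f p(x) > 0}, and IvIn_f({x : p(x) ≥ 0}) equals this set union Γ₀(p,f). In particular both are semi-algebraic sets. -/

import Mathlib

/-- The Lie derivative of a polynomial `p` along the polynomial vector field `f`. -/
noncomputable def lieDeriv {n : ℕ} (f : Fin n → MvPolynomial (Fin n) ℝ)
    (p : MvPolynomial (Fin n) ℝ) : MvPolynomial (Fin n) ℝ :=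
  ∑ j, MvPolynomial.pderiv j p * f j

/-- Iterated Lie derivatives: `lieIter f k p = L^k_f p`. -/
noncomputable def lieIter {n : ℕ} (f : Fin n → MvPolynomial (Fin n) ℝ)
    (k : ℕ) (p : MvPolynomial (Fin n) ℝ) : MvPolynomial (Fin n) ℝ :=
  match k with
  | 0 => p
  | k + 1 => lieDeriv f (lieIter f k p)

/-- `φ` is a global flow of the polynomial vector field `f`. -/
def IsPolyFlow {n : ℕ} (f : Fin n → MvPolynomial (Fin n) ℝ)
    (φ : (Fin n → ℝ) → ℝ → (Fin n → ℝ)) : Prop :=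
  (∀ x₀, φ x₀ 0 = x₀) ∧
    ∀ x₀ t (i : Fin n),
      HasDerivAt (fun s => φ x₀ s i) (MvPolynomial.eval (φ x₀ t) (f i)) t

/-- `In_f(A)`: points whose forward trajectory enters `A` immediately. -/
def InSet {n : ℕ} (φ : (Fin n → ℝ) → ℝ → (Fin n → ℝ)) (A : Set (Fin n → ℝ)) :
    Set (Fin n → ℝ) :=
  {x₀ | ∃ ε > 0, ∀ t ∈ Set.Ioo (0:ℝ) ε, φ x₀ t ∈ A}

/-- `IvIn_f(A)`: points whose backward trajectory comes from inside `A`. -/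
def IvInSet {n : ℕ} (φ : (Fin n → ℝ) → ℝ → (Fin n → ℝ)) (A : Set (Fin n → ℝ)) :
    Set (Fin n → ℝ) :=
  {x₀ | ∃ ε > 0, ∀ t ∈ Set.Ioo (0:ℝ) ε, φ x₀ (-t) ∈ A}

/-- `Γ₀(p,f)`: points where all Lie derivatives of `p` along `f` vanish. -/
def Gamma0 {n : ℕ} (f : Fin n → MvPolynomial (Fin n) ℝ)
    (p : MvPolynomial (Fin n) ℝ) : Set (Fin n → ℝ) :=
  {x | ∀ k : ℕ, MvPolynomial.eval x (lieIter f k p) = 0}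

/-- `Γ₊(p,f)`: points of finite pointwise rank whose first nonzero Lie
derivative is positive. -/
def GammaPlus {n : ℕ} (f : Fin n → MvPolynomial (Fin n) ℝ)
    (p : MvPolynomial (Fin n) ℝ) : Set (Fin n → ℝ) :=
  {x | ∃ k : ℕ, (∀ j < k, MvPolynomial.eval x (lieIter f j p) = 0) ∧
        0 < MvPolynomial.eval x (lieIter f k p)}

/-!
Along a trajectory, `G k t = L^k_f p (φ x₀ t)` satisfies `G k' = G (k+1)`, so if `k` is the first
index with `G k 0 ≠ 0`, then `k` applications of the mean value theorem show that `G 0 t` has the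
sign of `G k 0` for small `t > 0`; as `(-1)^j G j (-t)` obeys the same recurrence, `G 0 t` has the
sign of `(-1)^k G k 0` for small `t < 0`.
At points of `Γ₀(p,f)` every `G k 0` vanishes; by Noetherianity of `ℝ[x]` some `L^{N+1}_f p` is a
polynomial combination of `p, …, L^N_f p`, so `(G 0, …, G N)` solves a linear ODE with zero initial
value and vanishes identically by Grönwall's inequality.
-/

open MvPolynomial Filter Topology Set

section LieDeriv

variable {n : ℕ} (f : Fin n → MvPolynomial (Fin n) ℝ)

@[simp]
theorem lieIter_zero (p : MvPolynomial (Fin n) ℝ) : lieIter f 0 p = p :=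
  rfl

theorem lieDeriv_C (a : ℝ) : lieDeriv f (C a) = 0 := by
  simp [lieDeriv]

theorem lieDeriv_add (q r : MvPolynomial (Fin n) ℝ) :
    lieDeriv f (q + r) = lieDeriv f q + lieDeriv f r := by
  simp [lieDeriv, add_mul, Finset.sum_add_distrib]

theorem lieDeriv_mul_X (q : MvPolynomial (Fin n) ℝ) (i : Fin n) :
    lieDeriv f (q * X i) = lieDeriv f q * X i + q * f i := by
  simp only [lieDeriv, pderiv_mul, pderiv_X, add_mul, Finset.sum_add_distrib, Finset.sum_mul]
  congr 1
  · exact Finset.sum_congr rfl fun j _ => by ring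
  · simp [Pi.single_apply]

end LieDeriv

section Flow

variable {n : ℕ} {f : Fin n → MvPolynomial (Fin n) ℝ} {φ : (Fin n → ℝ) → ℝ → (Fin n → ℝ)}

theorem IsPolyFlow.hasDerivAt_eval (hφ : IsPolyFlow f φ) (x₀ : Fin n → ℝ)
    (q : MvPolynomial (Fin n) ℝ) (t : ℝ) :
    HasDerivAt (fun s => eval (φ x₀ s) q) (eval (φ x₀ t) (lieDeriv f q)) t := by
  induction q using MvPolynomial.induction_on with
  | C a => simpa [lieDeriv_C] using hasDerivAt_const t a
  | add q r hq hr => simpa [lieDeriv_add] using hq.fun_add hr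
  | mul_X q i hq => simpa [lieDeriv_mul_X] using hq.fun_mul (hφ.2 x₀ t i)

theorem IsPolyFlow.continuous_eval (hφ : IsPolyFlow f φ) (x₀ : Fin n → ℝ)
    (q : MvPolynomial (Fin n) ℝ) : Continuous fun s => eval (φ x₀ s) q :=
  continuous_iff_continuousAt.2 fun t => (hφ.hasDerivAt_eval x₀ q t).continuousAt

end Flow

section SignNearZero

theorem eventually_pos_of_hasDerivAt {g g' : ℝ → ℝ} (hg : ∀ t, HasDerivAt g (g' t) t)
    (h0 : g 0 = 0) (h' : ∀ᶠ t in 𝓝[>] 0, 0 < g' t) : ∀ᶠ t in 𝓝[>] 0, 0 < g t := by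
  obtain ⟨ε, hε, hpos⟩ := (nhdsGT_basis (0 : ℝ)).eventually_iff.1 h'
  refine (nhdsGT_basis (0 : ℝ)).eventually_iff.2 ⟨ε, hε, fun t ht => ?_⟩
  obtain ⟨c, hc, hslope⟩ := exists_hasDerivAt_eq_slope g g' ht.1
    (fun s _ => (hg s).continuousAt.continuousWithinAt) (fun s _ => hg s)
  have hgt : g t = g' c * t := by
    rw [hslope, h0, sub_zero, sub_zero, div_mul_cancel₀ _ ht.1.ne']
  rw [hgt]
  exact mul_pos (hpos ⟨hc.1, hc.2.trans ht.2⟩) ht.1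

variable (G : ℕ → ℝ → ℝ) (hG : ∀ j t, HasDerivAt (G j) (G (j + 1) t) t)
include hG

theorem eventually_pos_mul_of_hasDerivAt_succ {k : ℕ} (hk0 : ∀ j < k, G j 0 = 0)
    (hk : G k 0 ≠ 0) : ∀ᶠ t in 𝓝[>] 0, 0 < G k 0 * G 0 t := by
  induction k generalizing G with
  | zero =>
    have hcont : ContinuousAt (fun t => G 0 0 * G 0 t) 0 :=
      continuousAt_const.mul (hG 0 0).continuousAt
    exact nhdsWithin_le_nhds (hcont.eventually (lt_mem_nhds (mul_self_pos.2 hk)))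
  | succ k ih =>
    have hG1 := ih (fun j => G (j + 1)) (fun j t => hG (j + 1) t)
      (fun j hj => hk0 (j + 1) (by omega)) hk
    exact eventually_pos_of_hasDerivAt (fun t => (hG 0 t).const_mul _)
      (by simp [hk0 0 k.succ_pos]) hG1

theorem eventually_pos_mul_comp_neg_of_hasDerivAt_succ {k : ℕ} (hk0 : ∀ j < k, G j 0 = 0)
    (hk : G k 0 ≠ 0) : ∀ᶠ t in 𝓝[>] 0, 0 < (-1) ^ k * G k 0 * G 0 (-t) := by
  have hH : ∀ j t, HasDerivAt (fun s => (-1) ^ j * G j (-s))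
      ((-1) ^ (j + 1) * G (j + 1) (-t)) t := fun j t =>
    (((hG j (-t)).comp t (hasDerivAt_neg t)).const_mul ((-1 : ℝ) ^ j)).congr_deriv (by ring)
  simpa [mul_assoc] using eventually_pos_mul_of_hasDerivAt_succ (fun j s => (-1) ^ j * G j (-s)) hH
    (fun j hj => by simp [hk0 j hj]) (by simpa using hk)

end SignNearZero

section LinearODE

variable {E : Type*} [NormedAddCommGroup E] [NormedSpace ℝ E] {V V' : ℝ → E} {K : ℝ → ℝ}

theorem eq_zero_of_norm_deriv_le_mul_norm_of_nonneg (hV : ∀ t, HasDerivAt V (V' t) t)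
    (hK : Continuous K) (hbound : ∀ t, ‖V' t‖ ≤ K t * ‖V t‖) (h0 : V 0 = 0) {t : ℝ}
    (ht : 0 ≤ t) : V t = 0 := by
  obtain ⟨C, hC⟩ := isCompact_Icc.exists_bound_of_continuousOn (hK.continuousOn (s := Icc 0 t))
  refine eq_zero_of_abs_deriv_le_mul_abs_self_of_eq_zero_right (K := C)
    (fun s _ => (hV s).continuousAt.continuousWithinAt) (fun s _ => (hV s).hasDerivWithinAt) h0
    (fun s hs => ?_) t ⟨ht, le_rfl⟩
  calc ‖V' s‖ ≤ K s * ‖V s‖ := hbound s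
    _ ≤ C * ‖V s‖ := by
      gcongr
      exact (le_abs_self _).trans (hC s (Ico_subset_Icc_self hs))

theorem eq_zero_of_norm_deriv_le_mul_norm (hV : ∀ t, HasDerivAt V (V' t) t)
    (hK : Continuous K) (hbound : ∀ t, ‖V' t‖ ≤ K t * ‖V t‖) (h0 : V 0 = 0) (t : ℝ) :
    V t = 0 := by
  rcases le_total 0 t with ht | ht
  · exact eq_zero_of_norm_deriv_le_mul_norm_of_nonneg hV hK hbound h0 ht
  · have hVneg : ∀ s, HasDerivAt (fun s => V (-s)) (-V' (-s)) s := fun s =>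
      ((hV (-s)).scomp s (hasDerivAt_neg s)).congr_deriv (by simp)
    simpa using eq_zero_of_norm_deriv_le_mul_norm_of_nonneg hVneg (hK.comp continuous_neg)
      (fun s => by simpa using hbound (-s)) (by simpa using h0) (neg_nonneg.2 ht)

theorem eq_zero_of_hasDerivAt_succ_of_eq_sum {N : ℕ} (G : ℕ → ℝ → ℝ)
    (hG : ∀ j t, HasDerivAt (G j) (G (j + 1) t) t) (c : Fin (N + 1) → ℝ → ℝ)
    (hc : ∀ i, Continuous (c i)) (hrec : ∀ t, G (N + 1) t = ∑ i, c i t * G i t)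
    (h0 : ∀ i : Fin (N + 1), G i 0 = 0) (t : ℝ) : G 0 t = 0 := by
  set V : ℝ → Fin (N + 1) → ℝ := fun s i => G i s
  have hV : ∀ s, HasDerivAt V (fun i => G (i + 1) s) s := fun s => hasDerivAt_pi.2 fun i => hG i s
  have hcoord : ∀ s (i : Fin (N + 1)), |G i s| ≤ ‖V s‖ := fun s i => norm_le_pi_norm (V s) i
  have hbound : ∀ s, ‖fun i : Fin (N + 1) => G (i + 1) s‖ ≤ (1 + ∑ i, |c i s|) * ‖V s‖ := by
    intro s
    have hsum : 0 ≤ ∑ i, |c i s| := Finset.sum_nonneg fun i _ => abs_nonneg _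
    refine (pi_norm_le_iff_of_nonneg (by positivity)).2 fun i => ?_
    rw [Real.norm_eq_abs]
    rcases (Nat.lt_succ_iff.1 i.is_lt).lt_or_eq with hi | hi
    · calc |G (i + 1) s| ≤ ‖V s‖ := hcoord s ⟨i + 1, by omega⟩
        _ ≤ (1 + ∑ i, |c i s|) * ‖V s‖ := le_mul_of_one_le_left (norm_nonneg _) (by linarith)
    · calc |G (i + 1) s| = |∑ j, c j s * G j s| := by rw [hi, hrec]
        _ ≤ ∑ j, |c j s| * ‖V s‖ := by
          refine (Finset.abs_sum_le_sum_abs _ _).trans (Finset.sum_le_sum fun j _ => ?_)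
          rw [abs_mul]
          exact mul_le_mul_of_nonneg_left (hcoord s j) (abs_nonneg _)
        _ ≤ (1 + ∑ i, |c i s|) * ‖V s‖ := by
          rw [← Finset.sum_mul]
          exact mul_le_mul_of_nonneg_right (by linarith) (norm_nonneg _)
  have hK : Continuous fun s => 1 + ∑ i, |c i s| := by fun_prop
  exact congrFun (eq_zero_of_norm_deriv_le_mul_norm hV hK hbound (funext h0) t) 0

end LinearODE

theorem IsNoetherianRing.exists_eq_sum_mul {R : Type*} [CommRing R] [IsNoetherianRing R]
    (a : ℕ → R) : ∃ N, ∃ c : Fin (N + 1) → R, a (N + 1) = ∑ i, c i * a i := by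
  let I : ℕ →o Ideal R := ⟨fun k => Ideal.span (range fun i : Fin k => a i),
    fun k l hkl => Ideal.span_mono <| by rintro _ ⟨i, rfl⟩; exact ⟨Fin.castLE hkl i, rfl⟩⟩
  obtain ⟨N, hN⟩ := monotone_stabilizes_iff_noetherian.2 inferInstance I
  have hmem : a (N + 1) ∈ I (N + 1) := by
    rw [← hN (N + 1) (by omega), hN (N + 2) (by omega)]
    exact Ideal.subset_span ⟨Fin.last (N + 1), rfl⟩
  obtain ⟨c, hc⟩ := Ideal.mem_span_range_iff_exists_fun.1 hmem
  exact ⟨N, c, hc.symm⟩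

theorem eventually_nonneg_iff_of_eventually_mul_pos {α : Type*} {l : Filter α} [l.NeBot]
    {e : ℝ} {g : α → ℝ} (h : ∀ᶠ t in l, 0 < e * g t) : (∀ᶠ t in l, 0 ≤ g t) ↔ 0 < e := by
  refine ⟨fun hg => ?_, fun he => h.mono fun t ht => (pos_of_mul_pos_right ht he.le).le⟩
  obtain ⟨t, ht, hgt⟩ := (h.and hg).exists
  exact pos_of_mul_pos_left ht hgt

theorem eventually_pos_iff_of_eventually_mul_pos {α : Type*} {l : Filter α} [l.NeBot]
    {e : ℝ} {g : α → ℝ} (h : ∀ᶠ t in l, 0 < e * g t) : (∀ᶠ t in l, 0 < g t) ↔ 0 < e :=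
  ⟨fun hg => (eventually_nonneg_iff_of_eventually_mul_pos h).1 (hg.mono fun _ => le_of_lt),
    fun he => h.mono fun _ ht => pos_of_mul_pos_right ht he.le⟩

theorem exists_first_ne_zero_mul_pos_iff {a s : ℕ → ℝ} {k : ℕ} (hk0 : ∀ j < k, a j = 0)
    (hk : a k ≠ 0) : (∃ m, (∀ j < m, a j = 0) ∧ 0 < s m * a m) ↔ 0 < s k * a k := by
  refine ⟨fun ⟨m, hm0, hm⟩ => ?_, fun h => ⟨k, hk0, h⟩⟩
  obtain rfl : m = k := by
    rcases lt_trichotomy m k with hmk | hmk | hmk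
    · simp [hk0 m hmk] at hm
    · exact hmk
    · exact absurd (hm0 k hmk) hk
  exact hm

theorem mem_ivInSet_iff {n : ℕ} {φ : (Fin n → ℝ) → ℝ → (Fin n → ℝ)} {A : Set (Fin n → ℝ)}
    {x₀ : Fin n → ℝ} : x₀ ∈ IvInSet φ A ↔ ∀ᶠ t in 𝓝[>] 0, φ x₀ (-t) ∈ A :=
  (nhdsGT_basis 0).eventually_iff.symm

section Trajectory

variable {n : ℕ} {f : Fin n → MvPolynomial (Fin n) ℝ} {φ : (Fin n → ℝ) → ℝ → (Fin n → ℝ)}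
  {p : MvPolynomial (Fin n) ℝ} {x₀ : Fin n → ℝ}

theorem IsPolyFlow.eval_eq_zero_of_mem_gamma0 (hφ : IsPolyFlow f φ) (hx : x₀ ∈ Gamma0 f p)
    (t : ℝ) : eval (φ x₀ t) p = 0 := by
  obtain ⟨N, q, hq⟩ := IsNoetherianRing.exists_eq_sum_mul fun k => lieIter f k p
  exact eq_zero_of_hasDerivAt_succ_of_eq_sum (fun k s => eval (φ x₀ s) (lieIter f k p))
    (fun k s => hφ.hasDerivAt_eval x₀ _ s) (fun i s => eval (φ x₀ s) (q i))
    (fun i => hφ.continuous_eval x₀ _) (fun s => by simp [hq]) (fun i => by simp [hφ.1, hx i]) t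

theorem IsPolyFlow.eventually_pos_mul_eval_neg (hφ : IsPolyFlow f φ) {k : ℕ}
    (hk0 : ∀ j < k, eval x₀ (lieIter f j p) = 0) (hk : eval x₀ (lieIter f k p) ≠ 0) :
    ∀ᶠ t in 𝓝[>] 0, 0 < (-1) ^ k * eval x₀ (lieIter f k p) * eval (φ x₀ (-t)) p := by
  simpa [hφ.1] using eventually_pos_mul_comp_neg_of_hasDerivAt_succ
    (fun j s => eval (φ x₀ s) (lieIter f j p)) (fun j s => hφ.hasDerivAt_eval x₀ _ s)
    (by simpa [hφ.1] using hk0) (by simpa [hφ.1] using hk)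

end Trajectory

/-- Characterization of the backward immediate-entry sets of `{p > 0}` and `{p ≥ 0}`
via Lie derivatives with alternating signs. -/
theorem ivin_set_atomic_characterization
    {n : ℕ} (f : Fin n → MvPolynomial (Fin n) ℝ) (p : MvPolynomial (Fin n) ℝ)
    (φ : (Fin n → ℝ) → ℝ → (Fin n → ℝ)) (hφ : IsPolyFlow f φ) :
    IvInSet φ {x | 0 < MvPolynomial.eval x p}
      = {x | ∃ k : ℕ, (∀ j < k, MvPolynomial.eval x (lieIter f j p) = 0) ∧
            0 < (-1 : ℝ) ^ k * MvPolynomial.eval x (lieIter f k p)} ∧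
    IvInSet φ {x | 0 ≤ MvPolynomial.eval x p}
      = {x | ∃ k : ℕ, (∀ j < k, MvPolynomial.eval x (lieIter f j p) = 0) ∧
            0 < (-1 : ℝ) ^ k * MvPolynomial.eval x (lieIter f k p)} ∪ Gamma0 f p := by
  simp only [Set.ext_iff, Set.mem_union, mem_ivInSet_iff, Set.mem_ofPred_eq, ← forall_and]
  intro x₀
  by_cases hΓ : x₀ ∈ Gamma0 f p
  · have hS : ¬∃ k : ℕ, (∀ j < k, eval x₀ (lieIter f j p) = 0) ∧
        0 < (-1 : ℝ) ^ k * eval x₀ (lieIter f k p) := fun ⟨k, _, hk⟩ => by simp [hΓ k] at hk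
    simp [hφ.eval_eq_zero_of_mem_gamma0 hΓ, hΓ, hS, (nhdsGT_neBot (0 : ℝ)).ne]
  · obtain ⟨k, hk0, hk⟩ : ∃ k, (∀ j < k, eval x₀ (lieIter f j p) = 0) ∧
        eval x₀ (lieIter f k p) ≠ 0 := by
      have h : ∃ k, eval x₀ (lieIter f k p) ≠ 0 := by simpa [Gamma0] using hΓ
      exact ⟨Nat.find h, fun j hj => not_not.1 (Nat.find_min h hj), Nat.find_spec h⟩
    have hsign := hφ.eventually_pos_mul_eval_neg hk0 hk
    rw [exists_first_ne_zero_mul_pos_iff hk0 hk, or_iff_left hΓ]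
    exact ⟨eventually_pos_iff_of_eventually_mul_pos hsign,
      eventually_nonneg_iff_of_eventually_mul_pos hsign⟩
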